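/- Let m ≥ 2, T, Q_1,...,Q_m ∈ K[t] with S' = deg T ≥ 0, deg Q_m = S' + 1 and deg Q_j < S' + 1 for j = 1,...,m-1. Define B_{n,j} by arbitrary nonzero initial data (B_{0,1},...,B_{0,m}) and the recurrences B_{k+1,j} = Q_j B_{k,1} + T·D B_{k,j} + T·B_{k,j+1} for j < m and B_{k+1,m} = Q_m B_{k,1} + T·D B_{k,m}. Then det(B_{k+i-1,j})_{1≤i,j≤m} ≠ 0 for all k ∈ ℕ. -/
import Mathlib

open Polynomial

namespace Stmt7Aux


variable {K : Type*} [Field K]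

/-- Weighted-degree invariant: coordinate `p` strictly dominates with weighted degree `D`. -/
def PInv (m : ℕ) (v : Fin m → Polynomial K) (p : Fin m) (D : ℕ) : Prop :=
  (v p ≠ 0 ∧ m * (v p).natDegree + (m - 1 - (p : ℕ)) = D) ∧
  ∀ j, j ≠ p → (v j = 0 ∨ m * (v j).natDegree + (m - 1 - (j : ℕ)) < D)

lemma wadd {m w X : ℕ} {a b : Polynomial K}
    (ha : a = 0 ∨ m * a.natDegree + w < X) (hb : b = 0 ∨ m * b.natDegree + w < X) :
    a + b = 0 ∨ m * (a + b).natDegree + w < X := by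
  rcases ha with rfl | ha
  · simpa using hb
  rcases hb with rfl | hb
  · simpa using Or.inr ha
  right
  have h1 : (a + b).natDegree ≤ a.natDegree ∨ (a + b).natDegree ≤ b.natDegree := by
    have := natDegree_add_le a b
    rcases le_total a.natDegree b.natDegree with h | h
    · right; omega
    · left; omega
  rcases h1 with h1 | h1
  · have := Nat.mul_le_mul_left m h1; omega
  · have := Nat.mul_le_mul_left m h1; omega

lemma wdom {m w X : ℕ} {a b : Polynomial K}
    (ha : a = 0 ∨ m * a.natDegree + w < X) (hb : b ≠ 0) (hbe : m * b.natDegree + w = X) :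
    a + b ≠ 0 ∧ m * (a + b).natDegree + w = X := by
  rcases ha with rfl | ha
  · simpa using ⟨hb, hbe⟩
  have hmul : m * a.natDegree < m * b.natDegree := by omega
  have hnd : a.natDegree < b.natDegree := by
    by_contra hc
    exact absurd (Nat.mul_le_mul_left m (not_lt.mp hc)) (not_le.mpr hmul)
  refine ⟨?_, by rw [natDegree_add_eq_right_of_natDegree_lt hnd, hbe]⟩
  intro h0
  have := degree_add_eq_right_of_degree_lt (degree_lt_degree hnd)
  rw [h0, degree_zero] at this
  exact hb (degree_eq_bot.mp this.symm)

lemma base {m : ℕ} (hm : 2 ≤ m) {v : Fin m → Polynomial K} (hv : ∃ j, v j ≠ 0) :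
    ∃ p D, PInv m v p D := by
  classical
  set f : Fin m → ℕ := fun j => m * (v j).natDegree + (m - 1 - (j : ℕ)) with hf
  obtain ⟨j0, hj0⟩ := hv
  have hs : (Finset.univ.filter (fun j => v j ≠ 0)).Nonempty :=
    ⟨j0, by simp [hj0]⟩
  obtain ⟨p, hp, hmax⟩ := Finset.exists_max_image _ f hs
  have hpne : v p ≠ 0 := by simpa using hp
  refine ⟨p, f p, ⟨⟨hpne, rfl⟩, ?_⟩⟩
  intro j hj
  by_cases hjz : v j = 0
  · exact Or.inl hjz
  right
  have hle : f j ≤ f p := hmax j (by simp [hjz])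
  have hne : f j ≠ f p := by
    intro heq
    apply hj
    have h1 : f j % m = (m - 1 - (j : ℕ)) := by
      rw [hf]; simp only []
      rw [Nat.mul_add_mod]
      exact Nat.mod_eq_of_lt (by omega)
    have h2 : f p % m = (m - 1 - (p : ℕ)) := by
      rw [hf]; simp only []
      rw [Nat.mul_add_mod]
      exact Nat.mod_eq_of_lt (by omega)
    have hj' : (j : ℕ) < m := j.isLt
    have hp' : (p : ℕ) < m := p.isLt
    have : (j : ℕ) = (p : ℕ) := by
      rw [heq] at h1; omega
    exact Fin.ext this
  exact lt_of_le_of_ne hle hne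

set_option maxHeartbeats 1600000 in
/-- one step of the recurrence moves the dominant coordinate back by one (cyclically)
and increases the weighted degree by `m*S+1`. -/
lemma step {m S : ℕ} (hm : 2 ≤ m) {T : Polynomial K} (hT : T ≠ 0) (hS : T.natDegree = S)
    {Q : Fin m → Polynomial K}
    (hQl : Q ⟨m - 1, by omega⟩ ≠ 0) (hQle : (Q ⟨m - 1, by omega⟩).natDegree = S + 1)
    (hQs : ∀ j : Fin m, (j : ℕ) + 1 < m → (Q j = 0 ∨ (Q j).natDegree ≤ S))
    {v w : Fin m → Polynomial K}
    (hr : ∀ j : Fin m, ∀ h : (j : ℕ) + 1 < m,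
      w j = Q j * v ⟨0, by omega⟩ + T * derivative (v j) + T * v ⟨(j : ℕ) + 1, h⟩)
    (hrm : w ⟨m - 1, by omega⟩ = Q ⟨m - 1, by omega⟩ * v ⟨0, by omega⟩
      + T * derivative (v ⟨m - 1, by omega⟩))
    {p : Fin m} {D : ℕ} (h : PInv m v p D) :
    ∀ p' : Fin m, (p' : ℕ) = ((p : ℕ) + (m - 1)) % m →
      PInv m w p' (D + (m * S + 1)) := by
  obtain ⟨⟨hvp, hvpe⟩, hsm⟩ := h
  have hm0 : 0 < m := Nat.lt_of_lt_of_le Nat.zero_lt_two hm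
  have hm1 : m - 1 < m := Nat.sub_lt hm0 Nat.one_pos
  -- clean mk's with small proofs
  have hrm' : w ⟨m - 1, hm1⟩ = Q ⟨m - 1, hm1⟩ * v ⟨0, hm0⟩
      + T * derivative (v ⟨m - 1, hm1⟩) := hrm
  have hr' : ∀ j : Fin m, ∀ h : (j : ℕ) + 1 < m,
      w j = Q j * v ⟨0, hm0⟩ + T * derivative (v j) + T * v ⟨(j : ℕ) + 1, h⟩ := hr
  have hQl' : Q ⟨m - 1, hm1⟩ ≠ 0 := hQl
  have hQle' : (Q ⟨m - 1, hm1⟩).natDegree = S + 1 := hQle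
  clear hrm hr hQl hQle
  have hTS : m * T.natDegree = m * S := by rw [hS]
  -- uniform bound
  have hz : ∀ j : Fin m, v j = 0 ∨ m * (v j).natDegree + (m - 1 - (j : ℕ)) ≤ D := by
    intro j
    by_cases hj : j = p
    · subst hj; exact Or.inr (le_of_eq hvpe)
    · rcases hsm j hj with h1 | h1
      · exact Or.inl h1
      · exact Or.inr h1.le
  have hv0D : v ⟨0, hm0⟩ ≠ 0 → m * (v ⟨0, hm0⟩).natDegree + (m - 1) ≤ D := by
    intro hv0
    rcases hz ⟨0, hm0⟩ with h1 | h1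
    · exact absurd h1 hv0
    · simpa using h1
  -- the Q_j * v 0 term, j+1 < m : always strictly small
  have tQ : ∀ j : Fin m, (j : ℕ) + 1 < m →
      (Q j * v ⟨0, hm0⟩ = 0 ∨
        m * (Q j * v ⟨0, hm0⟩).natDegree + (m - 1 - (j : ℕ)) < D + (m * S + 1)) := by
    intro j hj
    by_cases hQne : Q j = 0
    · exact Or.inl (by rw [hQne, zero_mul])
    by_cases hv0 : v ⟨0, hm0⟩ = 0
    · exact Or.inl (by rw [hv0, mul_zero])
    have hq : (Q j).natDegree ≤ S := by
      rcases hQs j hj with hc | hc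
      · exact absurd hc hQne
      · exact hc
    right
    rw [natDegree_mul hQne hv0]
    have h0 := hv0D hv0
    have hmq : m * (Q j).natDegree ≤ m * S := Nat.mul_le_mul_left m hq
    have hexp : m * ((Q j).natDegree + (v ⟨0, hm0⟩).natDegree)
        = m * (Q j).natDegree + m * (v ⟨0, hm0⟩).natDegree := by ring
    omega
  -- the T * derivative term : always strictly small
  have tD : ∀ j : Fin m,
      (T * derivative (v j) = 0 ∨
        m * (T * derivative (v j)).natDegree + (m - 1 - (j : ℕ)) < D + (m * S + 1)) := by
    intro j
    by_cases hd : derivative (v j) = 0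
    · exact Or.inl (by rw [hd, mul_zero])
    have hvj : v j ≠ 0 := by
      intro hc; apply hd; rw [hc]; simp
    right
    rw [natDegree_mul hT hd]
    have h1 : (derivative (v j)).natDegree ≤ (v j).natDegree := by
      have := natDegree_derivative_le (v j); omega
    have h2 : m * (v j).natDegree + (m - 1 - (j : ℕ)) ≤ D := by
      rcases hz j with hc | hc
      · exact absurd hc hvj
      · exact hc
    have hmd : m * (derivative (v j)).natDegree ≤ m * (v j).natDegree :=
      Nat.mul_le_mul_left m h1
    have hexp : m * (T.natDegree + (derivative (v j)).natDegree)
        = m * T.natDegree + m * (derivative (v j)).natDegree := by ring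
    have hjlt : (j : ℕ) < m := j.isLt
    omega
  -- the T * v (j+1) term when j+1 ≠ p : strictly small
  have tT : ∀ j : Fin m, ∀ hj : (j : ℕ) + 1 < m, (⟨(j : ℕ) + 1, hj⟩ : Fin m) ≠ p →
      (T * v ⟨(j : ℕ) + 1, hj⟩ = 0 ∨
        m * (T * v ⟨(j : ℕ) + 1, hj⟩).natDegree + (m - 1 - (j : ℕ)) < D + (m * S + 1)) := by
    intro j hj hne
    by_cases hv1 : v ⟨(j : ℕ) + 1, hj⟩ = 0
    · exact Or.inl (by rw [hv1, mul_zero])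
    right
    rw [natDegree_mul hT hv1]
    rcases hsm ⟨(j : ℕ) + 1, hj⟩ hne with hc | hc
    · exact absurd hc hv1
    have hc' : m * (v ⟨(j : ℕ) + 1, hj⟩).natDegree + (m - 1 - ((j : ℕ) + 1)) < D := hc
    have hexp : m * (T.natDegree + (v ⟨(j : ℕ) + 1, hj⟩).natDegree)
        = m * T.natDegree + m * (v ⟨(j : ℕ) + 1, hj⟩).natDegree := by ring
    have hjlt : (j : ℕ) < m := j.isLt
    omega
  -- now assemble
  intro p' hp'v
  have hplt : (p : ℕ) < m := p.isLt
  refine ⟨?_, ?_⟩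
  · -- dominant coordinate p'
    by_cases h0 : (p : ℕ) = 0
    · -- p' = last, use hrm'
      have hpl : p' = ⟨m - 1, hm1⟩ := by
        apply Fin.ext
        show (p' : ℕ) = m - 1
        rw [hp'v, h0, Nat.zero_add]
        exact Nat.mod_eq_of_lt hm1
      rw [hpl, hrm']
      have hzp : (⟨0, hm0⟩ : Fin m) = p := by
        apply Fin.ext
        show (0 : ℕ) = (p : ℕ)
        omega
      have hv0 : v ⟨0, hm0⟩ ≠ 0 := by rw [hzp]; exact hvp
      have hdom : Q ⟨m - 1, hm1⟩ * v ⟨0, hm0⟩ ≠ 0 ∧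
          m * (Q ⟨m - 1, hm1⟩ * v ⟨0, hm0⟩).natDegree + (m - 1 - ((⟨m - 1, hm1⟩ : Fin m) : ℕ))
            = D + (m * S + 1) := by
        refine ⟨mul_ne_zero hQl' hv0, ?_⟩
        rw [natDegree_mul hQl' hv0, hQle']
        have h2 : m * (v ⟨0, hm0⟩).natDegree + (m - 1 - 0) = D := by
          rw [hzp]; rw [← hvpe, h0]
        have hexp : m * (S + 1 + (v ⟨0, hm0⟩).natDegree)
            = m * S + m + m * (v ⟨0, hm0⟩).natDegree := by ring
        have hval : ((⟨m - 1, hm1⟩ : Fin m) : ℕ) = m - 1 := rfl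
        omega
      have := wdom (tD ⟨m - 1, hm1⟩) hdom.1 hdom.2
      rwa [add_comm (T * derivative (v ⟨m - 1, hm1⟩))] at this
    · -- p' = p - 1, use hr'
      have hjval : (p' : ℕ) = (p : ℕ) - 1 := by
        rw [hp'v]
        have he : (p : ℕ) + (m - 1) = ((p : ℕ) - 1) + m := by omega
        rw [he, Nat.add_mod_right]
        exact Nat.mod_eq_of_lt (by omega)
      have hjlt : (p' : ℕ) + 1 < m := by omega
      have he : (⟨(p' : ℕ) + 1, hjlt⟩ : Fin m) = p := by
        apply Fin.ext
        show (p' : ℕ) + 1 = (p : ℕ)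
        omega
      rw [hr' p' hjlt]
      have hdom : T * v ⟨(p' : ℕ) + 1, hjlt⟩ ≠ 0 ∧
          m * (T * v ⟨(p' : ℕ) + 1, hjlt⟩).natDegree + (m - 1 - (p' : ℕ))
            = D + (m * S + 1) := by
        rw [he]
        refine ⟨mul_ne_zero hT hvp, ?_⟩
        rw [natDegree_mul hT hvp]
        have hexp : m * (T.natDegree + (v p).natDegree)
            = m * T.natDegree + m * (v p).natDegree := by ring
        omega
      exact wdom (wadd (tQ p' hjlt) (tD p')) hdom.1 hdom.2
  · -- all other coordinates strictly small
    intro j hj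
    have hjm : (j : ℕ) < m := j.isLt
    by_cases hjl : (j : ℕ) + 1 < m
    · rw [hr' j hjl]
      have hne : (⟨(j : ℕ) + 1, hjl⟩ : Fin m) ≠ p := by
        intro hc
        apply hj
        apply Fin.ext
        have hpv : (p : ℕ) = (j : ℕ) + 1 := by rw [← hc]
        show (j : ℕ) = (p' : ℕ)
        rw [hp'v, hpv]
        have he : (j : ℕ) + 1 + (m - 1) = (j : ℕ) + m := by omega
        rw [he, Nat.add_mod_right, Nat.mod_eq_of_lt hjm]
      exact wadd (wadd (tQ j hjl) (tD j)) (tT j hjl hne)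
    · -- j = last
      have hjeq : j = ⟨m - 1, hm1⟩ := Fin.ext (by show (j : ℕ) = m - 1; omega)
      have hp0 : (p : ℕ) ≠ 0 := by
        intro hc
        apply hj
        apply Fin.ext
        show (j : ℕ) = (p' : ℕ)
        rw [hp'v, hc, Nat.zero_add, Nat.mod_eq_of_lt hm1]
        omega
      rw [hjeq, hrm']
      have tQl : Q ⟨m - 1, hm1⟩ * v ⟨0, hm0⟩ = 0 ∨
          m * (Q ⟨m - 1, hm1⟩ * v ⟨0, hm0⟩).natDegree
            + (m - 1 - ((⟨m - 1, hm1⟩ : Fin m) : ℕ)) < D + (m * S + 1) := by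
        by_cases hv0 : v ⟨0, hm0⟩ = 0
        · exact Or.inl (by rw [hv0, mul_zero])
        right
        rw [natDegree_mul hQl' hv0, hQle']
        have hzp : (⟨0, hm0⟩ : Fin m) ≠ p := by
          intro hc; apply hp0; rw [← hc]
        have hlt : m * (v ⟨0, hm0⟩).natDegree + (m - 1 - 0) < D := by
          rcases hsm ⟨0, hm0⟩ hzp with hc | hc
          · exact absurd hc hv0
          · exact hc
        have hexp : m * (S + 1 + (v ⟨0, hm0⟩).natDegree)
            = m * S + m + m * (v ⟨0, hm0⟩).natDegree := by ring
        have hval : ((⟨m - 1, hm1⟩ : Fin m) : ℕ) = m - 1 := rfl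
        omega
      exact wadd tQl (tD ⟨m - 1, hm1⟩)


/-- cyclic predecessor on `Fin m` -/
def pd (m : ℕ) (hm0 : 0 < m) (q : Fin m) : Fin m :=
  ⟨((q : ℕ) + (m - 1)) % m, Nat.mod_lt _ hm0⟩

lemma pd_iter_val (m : ℕ) (hm0 : 0 < m) (p : Fin m) :
    ∀ i, (((pd m hm0)^[i] p : ℕ) + i) % m = (p : ℕ) % m := by
  intro i
  induction i with
  | zero => simp
  | succ i ih =>
    rw [Function.iterate_succ_apply']
    have h1 : ((pd m hm0 ((pd m hm0)^[i] p)) : ℕ)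
        = (((pd m hm0)^[i] p : ℕ) + (m - 1)) % m := rfl
    rw [h1, Nat.mod_add_mod]
    have h2 : ((pd m hm0)^[i] p : ℕ) + (m - 1) + (i + 1)
        = (((pd m hm0)^[i] p : ℕ) + i) + m := by omega
    rw [h2, Nat.add_mod_right]
    exact ih

lemma pd_iter_inj (m : ℕ) (hm0 : 0 < m) (p : Fin m) {a b : ℕ}
    (h : (pd m hm0)^[a] p = (pd m hm0)^[b] p) : a % m = b % m := by
  have h1 := pd_iter_val m hm0 p a
  have h2 := pd_iter_val m hm0 p b
  rw [h] at h1
  have h3 : (((pd m hm0)^[b] p : ℕ) + a) % m = (((pd m hm0)^[b] p : ℕ) + b) % m :=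
    h1.trans h2.symm
  have h4 : a ≡ b [MOD m] := Nat.ModEq.add_left_cancel' _ h3
  exact h4

set_option maxHeartbeats 1600000 in
lemma iterInv {m S : ℕ} (hm : 2 ≤ m) {T : Polynomial K} (hT : T ≠ 0) (hS : T.natDegree = S)
    {Q : Fin m → Polynomial K}
    (hQl : Q ⟨m - 1, by omega⟩ ≠ 0) (hQle : (Q ⟨m - 1, by omega⟩).natDegree = S + 1)
    (hQs : ∀ j : Fin m, (j : ℕ) + 1 < m → (Q j = 0 ∨ (Q j).natDegree ≤ S))
    {B : ℕ → Fin m → Polynomial K}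
    (hrec : ∀ k : ℕ, ∀ j : Fin m, ∀ h : (j : ℕ) + 1 < m,
      B (k + 1) j = Q j * B k ⟨0, by omega⟩
        + T * derivative (B k j) + T * B k ⟨(j : ℕ) + 1, h⟩)
    (hrecm : ∀ k : ℕ,
      B (k + 1) ⟨m - 1, by omega⟩ = Q ⟨m - 1, by omega⟩ * B k ⟨0, by omega⟩
        + T * derivative (B k ⟨m - 1, by omega⟩))
    (hm0 : 0 < m) {p0 : Fin m} {D0 : ℕ} (h0 : PInv m (B 0) p0 D0) :
    ∀ n, PInv m (B n) ((pd m hm0)^[n] p0) (D0 + n * (m * S + 1)) := by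
  intro n
  induction n with
  | zero => simpa using h0
  | succ n ih =>
    have harith : D0 + (n + 1) * (m * S + 1) = (D0 + n * (m * S + 1)) + (m * S + 1) := by ring
    rw [harith, Function.iterate_succ_apply']
    exact step hm hT hS hQl hQle hQs (hrec n) (hrecm n) ih _ rfl

end Stmt7Aux

open Stmt7Aux in
set_option maxHeartbeats 1600000 in
/-- **Theorem 2, case (280).** Let `m ≥ 2`, `T, Q₁, …, Q_m ∈ K[t]` with `S' = deg T ≥ 0`,
`deg Q_m = S' + 1` and `deg Q_j < S' + 1` for `j = 1, …, m-1`. Define `B_{n,j}` by arbitrary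
nonzero initial data and the recurrences `B_{k+1,j} = Q_j B_{k,1} + T·D B_{k,j} + T·B_{k,j+1}`
(`j < m`) and `B_{k+1,m} = Q_m B_{k,1} + T·D B_{k,m}`. Then
`det (B_{k+i-1,j})_{1≤i,j≤m} ≠ 0` for all `k`.
(`B n j` with `j : Fin m` stands for `B_{n,j+1}`.) -/
theorem stmt7 (K : Type*) [Field K] [CharZero K]
    (m : ℕ) (hm : 2 ≤ m)
    (T : Polynomial K) (Q : Fin m → Polynomial K)
    (hT : T ≠ 0)  -- S' = deg T ≥ 0
    (hQm : (Q ⟨m - 1, by omega⟩).degree = T.degree + 1)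
    (hQj : ∀ j : Fin m, (j : ℕ) + 1 < m → (Q j).degree < T.degree + 1)
    (B : ℕ → Fin m → Polynomial K)
    (hB0 : ∃ j : Fin m, B 0 j ≠ 0)
    (hrec : ∀ k : ℕ, ∀ j : Fin m, ∀ h : (j : ℕ) + 1 < m,
      B (k + 1) j = Q j * B k ⟨0, by omega⟩
        + T * derivative (B k j) + T * B k ⟨(j : ℕ) + 1, h⟩)
    (hrecm : ∀ k : ℕ,
      B (k + 1) ⟨m - 1, by omega⟩ = Q ⟨m - 1, by omega⟩ * B k ⟨0, by omega⟩
        + T * derivative (B k ⟨m - 1, by omega⟩)) :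
    ∀ k : ℕ, Matrix.det (Matrix.of fun i j : Fin m => B (k + (i : ℕ)) j) ≠ 0 := by
  classical
  intro k
  have hm0 : 0 < m := by omega
  set S := T.natDegree with hSdef
  have hTdeg : T.degree = (S : WithBot ℕ) := degree_eq_natDegree hT
  have hcast : (S : WithBot ℕ) + 1 = ((S + 1 : ℕ) : WithBot ℕ) := by exact_mod_cast rfl
  have hQl : Q ⟨m - 1, by omega⟩ ≠ 0 := by
    intro hc
    rw [hc, degree_zero, hTdeg, hcast] at hQm
    exact WithBot.bot_ne_coe hQm
  have hQle : (Q ⟨m - 1, by omega⟩).natDegree = S + 1 := by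
    apply natDegree_eq_of_degree_eq_some
    rw [hQm, hTdeg, hcast]
  have hQs : ∀ j : Fin m, (j : ℕ) + 1 < m → (Q j = 0 ∨ (Q j).natDegree ≤ S) := by
    intro j hj
    by_cases hq : Q j = 0
    · exact Or.inl hq
    right
    have h1 := hQj j hj
    rw [hTdeg, hcast] at h1
    have h3 : (Q j).natDegree < S + 1 := (natDegree_lt_iff_degree_lt hq).mpr h1
    omega
  obtain ⟨p0, D0, h0⟩ := base hm hB0
  have hrow : ∀ n, PInv m (B n) ((pd m hm0)^[n] p0) (D0 + n * (m * S + 1)) :=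
    iterInv hm hT rfl hQl hQle hQs hrec hrecm hm0 h0
  -- the distinguished permutation
  have hτinj : ∀ a b : Fin m,
      (pd m hm0)^[k + (a : ℕ)] p0 = (pd m hm0)^[k + (b : ℕ)] p0 → a = b := by
    intro a b hab
    have h1 := pd_iter_inj m hm0 p0 hab
    have h2 : (a : ℕ) ≡ (b : ℕ) [MOD m] := Nat.ModEq.add_left_cancel' k h1
    have h3 : (a : ℕ) % m = (b : ℕ) % m := h2
    rw [Nat.mod_eq_of_lt a.isLt, Nat.mod_eq_of_lt b.isLt] at h3
    exact Fin.ext h3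
  obtain ⟨σs, hτσ⟩ : ∃ σs : Equiv.Perm (Fin m),
      ∀ i, (pd m hm0)^[k + ((σs i : Fin m) : ℕ)] p0 = i := by
    have hinj : Function.Injective (fun i : Fin m => (pd m hm0)^[k + (i : ℕ)] p0) :=
      fun a b hab => hτinj a b hab
    have hbij := Finite.injective_iff_bijective.mp hinj
    exact ⟨(Equiv.ofBijective _ hbij).symm,
      fun i => (Equiv.ofBijective _ hbij).apply_symm_apply i⟩
  -- the permutation expansion terms
  set F : Equiv.Perm (Fin m) → Polynomial K :=
    fun σ => ∏ i : Fin m, B (k + ((σ i : Fin m) : ℕ)) i with hF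
  set W : ℕ := ∑ i : Fin m, (m - 1 - (i : ℕ)) with hW
  set Rv : ℕ := ∑ i : Fin m, (D0 + (k + (i : ℕ)) * (m * S + 1)) with hRv
  have hRσ : ∀ σ : Equiv.Perm (Fin m),
      ∑ i : Fin m, (D0 + (k + ((σ i : Fin m) : ℕ)) * (m * S + 1)) = Rv := by
    intro σ
    exact Equiv.sum_comp σ (fun i => D0 + (k + (i : ℕ)) * (m * S + 1))
  -- the dominant term
  have hfacs : ∀ i : Fin m, B (k + ((σs i : Fin m) : ℕ)) i ≠ 0 ∧
      m * (B (k + ((σs i : Fin m) : ℕ)) i).natDegree + (m - 1 - (i : ℕ))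
        = D0 + (k + ((σs i : Fin m) : ℕ)) * (m * S + 1) := by
    intro i
    have h := hrow (k + ((σs i : Fin m) : ℕ))
    rw [hτσ i] at h
    exact ⟨h.1.1, h.1.2⟩
  have hFs0 : F σs ≠ 0 := by
    rw [hF]
    exact Finset.prod_ne_zero_iff.mpr (fun i _ => (hfacs i).1)
  have hFsdeg : m * (F σs).natDegree + W = Rv := by
    rw [hF]
    rw [natDegree_prod _ _ (fun i _ => (hfacs i).1)]
    rw [hW, Finset.mul_sum, ← Finset.sum_add_distrib]
    rw [Finset.sum_congr rfl (fun i _ => (hfacs i).2)]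
    exact hRσ σs
  -- all other terms are strictly smaller
  have hother : ∀ σ : Equiv.Perm (Fin m), σ ≠ σs →
      (F σ = 0 ∨ m * (F σ).natDegree + W < Rv) := by
    intro σ hσ
    by_cases hzero : ∃ i, B (k + ((σ i : Fin m) : ℕ)) i = 0
    · obtain ⟨i0, hi0⟩ := hzero
      exact Or.inl (by rw [hF]; exact Finset.prod_eq_zero (Finset.mem_univ i0) hi0)
    push_neg at hzero
    right
    obtain ⟨j0, hj0⟩ : ∃ j0, σ j0 ≠ σs j0 := by
      by_contra hc
      push_neg at hc
      exact hσ (Equiv.ext hc)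
    have hle : ∀ i : Fin m,
        m * (B (k + ((σ i : Fin m) : ℕ)) i).natDegree + (m - 1 - (i : ℕ))
          ≤ D0 + (k + ((σ i : Fin m) : ℕ)) * (m * S + 1) := by
      intro i
      have h := hrow (k + ((σ i : Fin m) : ℕ))
      by_cases hp : (pd m hm0)^[k + ((σ i : Fin m) : ℕ)] p0 = i
      · rw [hp] at h
        exact le_of_eq h.1.2
      · rcases h.2 i (fun hc => hp hc.symm) with hc | hc
        · exact absurd hc (hzero i)
        · exact hc.le
    have hstrict : m * (B (k + ((σ j0 : Fin m) : ℕ)) j0).natDegree + (m - 1 - (j0 : ℕ))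
        < D0 + (k + ((σ j0 : Fin m) : ℕ)) * (m * S + 1) := by
      have h := hrow (k + ((σ j0 : Fin m) : ℕ))
      have hne : j0 ≠ (pd m hm0)^[k + ((σ j0 : Fin m) : ℕ)] p0 := by
        intro hc
        apply hj0
        apply hτinj
        rw [← hc, hτσ j0]
      rcases h.2 j0 hne with hc | hc
      · exact absurd hc (hzero j0)
      · exact hc
    have hsum : ∑ i : Fin m,
        (m * (B (k + ((σ i : Fin m) : ℕ)) i).natDegree + (m - 1 - (i : ℕ)))
        < ∑ i : Fin m, (D0 + (k + ((σ i : Fin m) : ℕ)) * (m * S + 1)) :=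
      Finset.sum_lt_sum (fun i _ => hle i) ⟨j0, Finset.mem_univ j0, hstrict⟩
    calc m * (F σ).natDegree + W
        = ∑ i : Fin m,
            (m * (B (k + ((σ i : Fin m) : ℕ)) i).natDegree + (m - 1 - (i : ℕ))) := by
          rw [hF, natDegree_prod _ _ (fun i _ => hzero i), hW, Finset.mul_sum,
            ← Finset.sum_add_distrib]
      _ < ∑ i : Fin m, (D0 + (k + ((σ i : Fin m) : ℕ)) * (m * S + 1)) := hsum
      _ = Rv := hRσ σ
  -- determinant expansion
  have hsmul_deg : ∀ (u : ℤˣ) (x : Polynomial K), (u • x).degree = x.degree := by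
    intro u x
    rcases Int.units_eq_one_or u with rfl | rfl
    · rw [one_smul]
    · rw [Units.smul_def]
      norm_num
  have hdet : (Matrix.of fun i j : Fin m => B (k + (i : ℕ)) j).det
      = ∑ σ : Equiv.Perm (Fin m), Equiv.Perm.sign σ • F σ := Matrix.det_apply _
  rw [hdet, ← Finset.sum_erase_add _ _ (Finset.mem_univ σs)]
  have hFsbot : (Equiv.Perm.sign σs • F σs).degree ≠ ⊥ := by
    rw [hsmul_deg]
    exact fun hbot => hFs0 (degree_eq_bot.mp hbot)
  have hGdeg : (∑ σ ∈ Finset.univ.erase σs, Equiv.Perm.sign σ • F σ).degree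
      < (Equiv.Perm.sign σs • F σs).degree := by
    refine lt_of_le_of_lt (degree_sum_le _ _) ?_
    rw [Finset.sup_lt_iff (bot_lt_iff_ne_bot.mpr hFsbot)]
    intro σ hσmem
    have hσne : σ ≠ σs := (Finset.mem_erase.mp hσmem).1
    rw [hsmul_deg, hsmul_deg]
    rcases hother σ hσne with hz | hlt
    · rw [hz, degree_zero]
      exact bot_lt_iff_ne_bot.mpr (fun hbot => hFs0 (degree_eq_bot.mp hbot))
    · apply degree_lt_degree
      have h9 : m * (F σ).natDegree < m * (F σs).natDegree := by omega
      exact Nat.lt_of_mul_lt_mul_left h9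
  have hdeg := degree_add_eq_right_of_degree_lt hGdeg
  intro hc
  rw [hc, degree_zero] at hdeg
  exact hFsbot hdeg.symm
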